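/- arXiv:2604.26921 — 5 statements merged into one kernel-verified Lean document; each statement's English description precedes it below -/
import Mathlib

section
/- For finite sets with |U| = B, if S is a uniformly random subset of U of size N, μ is a probability distribution on U, and H = {x ∈ U : μ(x) ≥ ε/N}, then Pr[|S ∩ H| ≥ δN] ≤ (eN/(δεB))^{δN}. -/
lemma aux_ratio (B N : ℕ) (hNB : N ≤ B) :
    ∀ k, k ≤ N → (((B - k).choose (N - k) : ℝ)) ≤ ((N : ℝ) / B) ^ k * (B.choose N) := by
  intro k
  induction k with
  | zero => simp
  | succ k ih =>
    intro hk1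
    have hkN : k < N := hk1
    have hkB : k < B := lt_of_lt_of_le hkN hNB
    have hB0 : 0 < B := by omega
    have key : (B - k) * ((B - (k+1)).choose (N - (k+1))) = (B - k).choose (N - k) * (N - k) := by
      have h1 : B - k = (B - (k+1)) + 1 := by omega
      have h2 : N - k = (N - (k+1)) + 1 := by omega
      rw [h1, h2]
      exact Nat.add_one_mul_choose_eq _ _
    have keyR : ((B - k : ℕ) : ℝ) * ((B - (k+1)).choose (N - (k+1)) : ℝ)
        = ((B - k).choose (N - k) : ℝ) * ((N - k : ℕ) : ℝ) := by exact_mod_cast key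
    have hBk : (0 : ℝ) < ((B - k : ℕ) : ℝ) := by
      exact_mod_cast Nat.sub_pos_of_lt hkB
    have hcross : ((N - k : ℕ) : ℝ) * B ≤ ((B - k : ℕ) : ℝ) * N := by
      rw [Nat.cast_sub hkN.le, Nat.cast_sub hkB.le]
      have hNR : (N : ℝ) ≤ B := by exact_mod_cast hNB
      have hkR : (0 : ℝ) ≤ (k : ℝ) := Nat.cast_nonneg _
      nlinarith
    have hBR : (0 : ℝ) < (B : ℝ) := by exact_mod_cast hB0
    have step1 : ((B - (k+1)).choose (N - (k+1)) : ℝ)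
        ≤ ((N : ℝ) / B) * ((B - k).choose (N - k) : ℝ) := by
      rw [div_mul_eq_mul_div, le_div_iff₀ hBR]
      have h3 : ((B - (k+1)).choose (N - (k+1)) : ℝ) * ((B - k : ℕ) : ℝ)
          = ((B - k).choose (N - k) : ℝ) * ((N - k : ℕ) : ℝ) := by linarith [keyR]
      have hC : (0 : ℝ) ≤ ((B - k).choose (N - k) : ℝ) := Nat.cast_nonneg _
      nlinarith [mul_le_mul_of_nonneg_left hcross hC]
    calc ((B - (k+1)).choose (N - (k+1)) : ℝ)
        ≤ ((N : ℝ) / B) * ((B - k).choose (N - k) : ℝ) := step1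
      _ ≤ ((N : ℝ) / B) * (((N : ℝ) / B) ^ k * (B.choose N)) := by
          apply mul_le_mul_of_nonneg_left (ih hkN.le)
          positivity
      _ = ((N : ℝ) / B) ^ (k+1) * (B.choose N) := by ring

lemma aux_choose (h k : ℕ) (hk : 0 < k) :
    (h.choose k : ℝ) ≤ (Real.exp 1 * h / k) ^ k := by
  have h1 : (h.choose k : ℝ) ≤ (h : ℝ) ^ k / (k.factorial : ℝ) :=
    Nat.choose_le_pow_div k h
  have h2 : ((k : ℝ)) ^ k / (k.factorial : ℝ) ≤ Real.exp k :=
    Real.pow_div_factorial_le_exp (x := (k : ℝ)) (Nat.cast_nonneg k) k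
  have hf0 : (0 : ℝ) < (k.factorial : ℝ) := by exact_mod_cast k.factorial_pos
  have hk0 : (0 : ℝ) < (k : ℝ) := by exact_mod_cast hk
  have hkk : (0 : ℝ) < (k : ℝ) ^ k := pow_pos hk0 k
  have h3 : ((k : ℝ)) ^ k ≤ Real.exp k * (k.factorial : ℝ) := by
    rw [div_le_iff₀ hf0] at h2; exact h2
  have hek : Real.exp (k : ℝ) = Real.exp 1 ^ k := by
    rw [← Real.exp_nat_mul]; norm_num
  refine h1.trans ?_
  rw [div_pow, mul_pow, div_le_div_iff₀ hf0 hkk]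
  calc (h : ℝ) ^ k * (k : ℝ) ^ k ≤ (h : ℝ) ^ k * (Real.exp 1 ^ k * (k.factorial : ℝ)) := by
        apply mul_le_mul_of_nonneg_left _ (by positivity)
        rw [← hek]; exact h3
    _ = Real.exp 1 ^ k * (h : ℝ) ^ k * (k.factorial : ℝ) := by ring

lemma aux_count {U : Type*} [Fintype U] [DecidableEq U] (B N k : ℕ)
    (hB : Fintype.card U = B) (H : Finset U) :
    (((Finset.univ : Finset U).powersetCard N).filter
        (fun S => k ≤ (S ∩ H).card)).card ≤ H.card.choose k * (B - k).choose (N - k) := by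
  classical
  have hsub : ((Finset.univ : Finset U).powersetCard N).filter (fun S => k ≤ (S ∩ H).card)
      ⊆ (H.powersetCard k).biUnion
        (fun T => ((Finset.univ : Finset U).powersetCard N).filter (fun S => T ⊆ S)) := by
    intro S hS
    rw [Finset.mem_filter] at hS
    obtain ⟨T, hT1, hT2⟩ := Finset.exists_subset_card_eq hS.2
    refine Finset.mem_biUnion.mpr ⟨T, ?_, ?_⟩
    · exact Finset.mem_powersetCard.mpr ⟨hT1.trans Finset.inter_subset_right, hT2⟩
    · exact Finset.mem_filter.mpr ⟨hS.1, hT1.trans Finset.inter_subset_left⟩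
  have hinner : ∀ T ∈ H.powersetCard k,
      (((Finset.univ : Finset U).powersetCard N).filter (fun S => T ⊆ S)).card
        ≤ (B - k).choose (N - k) := by
    intro T hT
    rw [Finset.mem_powersetCard] at hT
    have hmaps : ∀ S ∈ ((Finset.univ : Finset U).powersetCard N).filter (fun S => T ⊆ S),
        S \ T ∈ ((Finset.univ : Finset U) \ T).powersetCard (N - k) := by
      intro S hS
      rw [Finset.mem_filter, Finset.mem_powersetCard] at hS
      refine Finset.mem_powersetCard.mpr ⟨Finset.sdiff_subset_sdiff hS.1.1 le_rfl, ?_⟩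
      rw [Finset.card_sdiff_of_subset hS.2, hS.1.2, hT.2]
    have hinj : ∀ S₁ ∈ ((Finset.univ : Finset U).powersetCard N).filter (fun S => T ⊆ S),
        ∀ S₂ ∈ ((Finset.univ : Finset U).powersetCard N).filter (fun S => T ⊆ S),
        S₁ \ T = S₂ \ T → S₁ = S₂ := by
      intro S₁ h₁ S₂ h₂ he
      rw [Finset.mem_filter] at h₁ h₂
      rw [← Finset.sdiff_union_of_subset h₁.2, ← Finset.sdiff_union_of_subset h₂.2, he]
    have := Finset.card_le_card_of_injOn _ hmaps hinj
    refine this.trans ?_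
    rw [Finset.card_powersetCard, Finset.card_sdiff_of_subset (Finset.subset_univ T),
      Finset.card_univ, hB, hT.2]
  calc (((Finset.univ : Finset U).powersetCard N).filter (fun S => k ≤ (S ∩ H).card)).card
      ≤ ((H.powersetCard k).biUnion
          (fun T => ((Finset.univ : Finset U).powersetCard N).filter (fun S => T ⊆ S))).card :=
        Finset.card_le_card hsub
    _ ≤ ∑ T ∈ H.powersetCard k,
          (((Finset.univ : Finset U).powersetCard N).filter (fun S => T ⊆ S)).card :=
        Finset.card_biUnion_le
    _ ≤ ∑ _T ∈ H.powersetCard k, (B - k).choose (N - k) := Finset.sum_le_sum hinner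
    _ = H.card.choose k * (B - k).choose (N - k) := by
        rw [Finset.sum_const, Finset.card_powersetCard, smul_eq_mul]



/-- If `S` is a uniformly random `N`-subset of a finite set `U` of size `B`,
`μ` is a (sub)probability distribution on `U`, and `H` is the set of `ε/N`-heavy
points of `μ`, then `Pr[|S ∩ H| ≥ δN] ≤ (eN/(δεB))^{δN}`. -/
theorem stmt_0 {U : Type*} [Fintype U] [DecidableEq U]
    (B N : ℕ) (hB : Fintype.card U = B) (hNB : N ≤ B) (hN : 0 < N)
    (μ : U → ℝ) (hμ0 : ∀ x, 0 ≤ μ x) (hμ1 : ∑ x, μ x ≤ 1)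
    (ε δ : ℝ) (hε : 0 < ε) (hδ : 0 < δ)
    (H : Finset U) (hH : H = Finset.univ.filter (fun x => ε / N ≤ μ x)) :
    ((((Finset.univ : Finset U).powersetCard N).filter
        (fun S => δ * N ≤ ((S ∩ H).card : ℝ))).card : ℝ)
      / (((Finset.univ : Finset U).powersetCard N).card : ℝ)
      ≤ (Real.exp 1 * N / (δ * ε * B)) ^ (δ * (N : ℝ)) := by
  classical
  set base : ℝ := Real.exp 1 * N / (δ * ε * B) with hbase_def
  have hB0 : 0 < B := lt_of_lt_of_le hN hNB
  have hBR : (0 : ℝ) < B := by exact_mod_cast hB0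
  have hNR : (0 : ℝ) < N := by exact_mod_cast hN
  have hδN : (0 : ℝ) < δ * N := by positivity
  have hbase0 : 0 < base := by positivity
  set k : ℕ := ⌈δ * (N : ℝ)⌉₊ with hk_def
  have hkpos : 0 < k := Nat.ceil_pos.mpr hδN
  have hδNk : δ * N ≤ (k : ℝ) := Nat.le_ceil _
  have hden : ((Finset.univ : Finset U).powersetCard N).card = B.choose N := by
    rw [Finset.card_powersetCard, Finset.card_univ, hB]
  have hdenR : (0 : ℝ) < (((Finset.univ : Finset U).powersetCard N).card : ℝ) := by
    rw [hden]; exact_mod_cast Nat.choose_pos hNB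
  by_cases hb1 : 1 ≤ base
  · -- trivial case: RHS ≥ 1 ≥ LHS
    have hL : ((((Finset.univ : Finset U).powersetCard N).filter
        (fun S => δ * N ≤ ((S ∩ H).card : ℝ))).card : ℝ)
        / (((Finset.univ : Finset U).powersetCard N).card : ℝ) ≤ 1 := by
      rw [div_le_one hdenR]
      exact_mod_cast Finset.card_le_card (Finset.filter_subset _ _)
    refine hL.trans ?_
    calc (1 : ℝ) = base ^ (0 : ℝ) := (Real.rpow_zero base).symm
      _ ≤ base ^ (δ * (N : ℝ)) := Real.rpow_le_rpow_of_exponent_le hb1 hδN.le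
  · push_neg at hb1
    -- rewrite the filter condition using k
    have hfeq : ((Finset.univ : Finset U).powersetCard N).filter
        (fun S => δ * N ≤ ((S ∩ H).card : ℝ))
        = ((Finset.univ : Finset U).powersetCard N).filter
          (fun S => k ≤ (S ∩ H).card) := by
      apply Finset.filter_congr
      intro S _
      simp only [hk_def, Nat.ceil_le]
    by_cases hkN : k ≤ N
    · -- main case
      have hhH : ∀ x ∈ H, ε / N ≤ μ x := by
        intro x hx
        rw [hH, Finset.mem_filter] at hx
        exact hx.2
      have hHcard : (H.card : ℝ) ≤ N / ε := by
        have h1 : (H.card : ℝ) * (ε / N) ≤ ∑ x ∈ H, μ x := by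
          have := Finset.card_nsmul_le_sum H μ (ε / N) hhH
          simpa [nsmul_eq_mul] using this
        have h2 : ∑ x ∈ H, μ x ≤ ∑ x, μ x :=
          Finset.sum_le_sum_of_subset_of_nonneg (Finset.subset_univ H)
            (fun x _ _ => hμ0 x)
        have h3 : (H.card : ℝ) * (ε / N) ≤ 1 := h1.trans (h2.trans hμ1)
        rw [le_div_iff₀ hε]
        have h4 := mul_le_mul_of_nonneg_right h3 hNR.le
        rw [one_mul] at h4
        calc (H.card : ℝ) * ε = (H.card : ℝ) * (ε / N) * N := by field_simp
          _ ≤ N := h4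
      have hcount := aux_count B N k hB H
      have hnum : ((((Finset.univ : Finset U).powersetCard N).filter
          (fun S => δ * N ≤ ((S ∩ H).card : ℝ))).card : ℝ)
          ≤ (H.card.choose k : ℝ) * ((B - k).choose (N - k) : ℝ) := by
        rw [hfeq]
        exact_mod_cast hcount
      have hratio := aux_ratio B N hNB k hkN
      have hchoose := aux_choose H.card k hkpos
      have hkR : (0 : ℝ) < (k : ℝ) := by exact_mod_cast hkpos
      -- combine
      have hstep1 : ((((Finset.univ : Finset U).powersetCard N).filter
          (fun S => δ * N ≤ ((S ∩ H).card : ℝ))).card : ℝ)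
          / (((Finset.univ : Finset U).powersetCard N).card : ℝ)
          ≤ (H.card.choose k : ℝ) * (((N : ℝ) / B) ^ k) := by
        rw [div_le_iff₀ hdenR, hden]
        calc ((((Finset.univ : Finset U).powersetCard N).filter
            (fun S => δ * N ≤ ((S ∩ H).card : ℝ))).card : ℝ)
            ≤ (H.card.choose k : ℝ) * ((B - k).choose (N - k) : ℝ) := hnum
          _ ≤ (H.card.choose k : ℝ) * (((N : ℝ) / B) ^ k * (B.choose N : ℝ)) :=
              mul_le_mul_of_nonneg_left hratio (Nat.cast_nonneg _)
          _ = (H.card.choose k : ℝ) * ((N : ℝ) / B) ^ k * (B.choose N : ℝ) := by ring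
      have hstep2 : (H.card.choose k : ℝ) * (((N : ℝ) / B) ^ k)
          ≤ (Real.exp 1 * H.card / k * ((N : ℝ) / B)) ^ k := by
        rw [mul_pow]
        exact mul_le_mul_of_nonneg_right hchoose (by positivity)
      have hkey : Real.exp 1 * H.card / k * ((N : ℝ) / B) ≤ base := by
        rw [hbase_def, div_mul_div_comm, div_le_div_iff₀ (by positivity) (by positivity)]
        have hδεh : δ * ε * (H.card : ℝ) ≤ (k : ℝ) := by
          calc δ * ε * (H.card : ℝ) ≤ δ * ε * ((N : ℝ) / ε) := by
                apply mul_le_mul_of_nonneg_left hHcard (by positivity)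
            _ = δ * N := by field_simp
            _ ≤ (k : ℝ) := hδNk
        have he0 : (0 : ℝ) < Real.exp 1 := Real.exp_pos 1
        nlinarith [mul_le_mul_of_nonneg_left hδεh
          (by positivity : (0 : ℝ) ≤ Real.exp 1 * N * B)]
      have hLnonneg : (0 : ℝ) ≤ Real.exp 1 * H.card / k * ((N : ℝ) / B) := by positivity
      have hstep3 : (Real.exp 1 * H.card / k * ((N : ℝ) / B)) ^ k ≤ base ^ k :=
        pow_le_pow_left₀ hLnonneg hkey k
      have hstep4 : base ^ k ≤ base ^ (δ * (N : ℝ)) := by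
        rw [← Real.rpow_natCast base k]
        exact Real.rpow_le_rpow_of_exponent_ge hbase0 hb1.le hδNk
      calc ((((Finset.univ : Finset U).powersetCard N).filter
          (fun S => δ * N ≤ ((S ∩ H).card : ℝ))).card : ℝ)
          / (((Finset.univ : Finset U).powersetCard N).card : ℝ)
          ≤ (H.card.choose k : ℝ) * (((N : ℝ) / B) ^ k) := hstep1
        _ ≤ (Real.exp 1 * H.card / k * ((N : ℝ) / B)) ^ k := hstep2
        _ ≤ base ^ k := hstep3
        _ ≤ base ^ (δ * (N : ℝ)) := hstep4
    · -- k > N : the filter is empty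
      push_neg at hkN
      have hempty : ((Finset.univ : Finset U).powersetCard N).filter
          (fun S => δ * N ≤ ((S ∩ H).card : ℝ)) = ∅ := by
        rw [hfeq]
        apply Finset.filter_false_of_mem
        intro S hS
        rw [Finset.mem_powersetCard] at hS
        have : (S ∩ H).card ≤ N := by
          rw [← hS.2]
          exact Finset.card_le_card Finset.inter_subset_left
        omega
      rw [hempty]
      simp only [Finset.card_empty, Nat.cast_zero, zero_div]
      exact Real.rpow_nonneg hbase0.le _
end

section
/- Let π and π′ be permutations of [M], let Π = ∑_{x : π(x) ≠ π′(x)} |x⟩⟨x|, and for a state |φ⟩ over q query registers let Π_j denote Π acting on register j and p_j = ⟨φ|Π_j|φ⟩. Then ‖(O_π^{⊗q} − O_{π′}^{⊗q})|φ⟩‖ ≤ 2√(∑_{j∈[q]} p_j), where O_σ|x⟩ = |σ(x)⟩ is the in-place permutation oracle. -/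
/-!
Write `a = σ⁻¹ ∘ v` and `b = σ'⁻¹ ∘ v`. The amplitude difference `φ a - φ b` vanishes unless
`a ≠ b`, i.e. unless `a` (equivalently `b`) lies in the set `D` of configurations on which
`σ` and `σ'` disagree in some register; there `‖φ a - φ b‖² ≤ 2‖φ a‖² + 2‖φ b‖²`.
Reindexing each half by the permutation `v ↦ a` (resp. `v ↦ b`) bounds the squared distance
by `4 ∑_{w ∈ D} ‖φ w‖²`, and a union bound over the registers bounds this by `4 ∑_j p_j`.
-/

open Finset

lemma Finset.sum_le_sum_sum_of_forall_exists_mem {ι X R : Type*} [Fintype ι] [DecidableEq X]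
    [AddCommMonoid R] [PartialOrder R] [IsOrderedAddMonoid R] {s : Finset X}
    {t : ι → Finset X} {g : X → R} (hs : ∀ x ∈ s, ∃ j, x ∈ t j) (hg : ∀ x, 0 ≤ g x) :
    ∑ x ∈ s, g x ≤ ∑ j, ∑ x ∈ t j, g x := by
  have pointwise {x : X} (hx : x ∈ s) : g x ≤ ∑ j, if x ∈ t j then g x else 0 := by
    obtain ⟨j, hj⟩ := hs x hx
    calc g x = if x ∈ t j then g x else 0 := (if_pos hj).symm
      _ ≤ _ := single_le_sum (f := fun i => if x ∈ t i then g x else 0)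
        (fun i _ => ite_nonneg (hg x) le_rfl) (mem_univ j)
  calc ∑ x ∈ s, g x ≤ ∑ x ∈ s, ∑ j, if x ∈ t j then g x else 0 := sum_le_sum fun x => pointwise
    _ = ∑ j, ∑ x ∈ s ∩ t j, g x := by simp only [sum_comm (s := s), sum_ite_mem]
    _ ≤ ∑ j, ∑ x ∈ t j, g x :=
      sum_le_sum fun j _ => sum_le_sum_of_subset_of_nonneg inter_subset_right fun x _ _ => hg x

lemma norm_sub_sq_le_two_mul {E : Type*} [SeminormedAddCommGroup E] (a b : E) :
    ‖a - b‖ ^ 2 ≤ 2 * ‖a‖ ^ 2 + 2 * ‖b‖ ^ 2 := by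
  calc ‖a - b‖ ^ 2 ≤ (‖a‖ + ‖b‖) ^ 2 := pow_le_pow_left₀ (norm_nonneg _) (norm_sub_le a b) 2
    _ ≤ 2 * ‖a‖ ^ 2 + 2 * ‖b‖ ^ 2 := by linarith [add_sq_le (a := ‖a‖) (b := ‖b‖)]

section Reindex

variable {X R : Type*} [Fintype X] [DecidableEq X] [AddCommMonoid R]

lemma Equiv.sum_filter_ne_comp (e e' : X ≃ X) (g : X → R) :
    ∑ x ∈ univ.filter (fun x => e x ≠ e' x), g (e x)
      = ∑ y ∈ univ.filter (fun y => e.symm y ≠ e'.symm y), g y := by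
  simp only [sum_filter]
  refine Fintype.sum_equiv e _ _ fun x => ?_
  simp only [Equiv.symm_apply_apply, ne_eq, Equiv.eq_symm_apply, eq_comm (a := e' x)]

variable {E : Type*} [SeminormedAddCommGroup E]

lemma sum_norm_sub_comp_sq_le (e e' : X ≃ X) (f : X → E) :
    ∑ x, ‖f (e x) - f (e' x)‖ ^ 2
      ≤ 4 * ∑ y ∈ univ.filter (fun y => e.symm y ≠ e'.symm y), ‖f y‖ ^ 2 := by
  have pointwise (x : X) : ‖f (e x) - f (e' x)‖ ^ 2
      ≤ (if e x ≠ e' x then 2 * ‖f (e x)‖ ^ 2 else 0)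
        + (if e x ≠ e' x then 2 * ‖f (e' x)‖ ^ 2 else 0) := by
    by_cases h : e x = e' x
    · simp [h]
    · simpa [h] using norm_sub_sq_le_two_mul (f (e x)) (f (e' x))
  have reindex_e := e.sum_filter_ne_comp e' (fun y => ‖f y‖ ^ 2)
  have reindex_e' := e'.sum_filter_ne_comp e (fun y => ‖f y‖ ^ 2)
  simp only [ne_comm (a := e'.symm _), ne_comm (a := e' _)] at reindex_e'
  calc ∑ x, ‖f (e x) - f (e' x)‖ ^ 2
      ≤ ∑ x, ((if e x ≠ e' x then 2 * ‖f (e x)‖ ^ 2 else 0)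
        + (if e x ≠ e' x then 2 * ‖f (e' x)‖ ^ 2 else 0)) := sum_le_sum fun x _ => pointwise x
    _ = 2 * ∑ x ∈ univ.filter (fun x => e x ≠ e' x), ‖f (e x)‖ ^ 2
        + 2 * ∑ x ∈ univ.filter (fun x => e x ≠ e' x), ‖f (e' x)‖ ^ 2 := by
      simp only [sum_add_distrib, mul_sum, sum_filter, mul_ite, mul_zero]
    _ = 4 * ∑ y ∈ univ.filter (fun y => e.symm y ≠ e'.symm y), ‖f y‖ ^ 2 := by
      rw [reindex_e, reindex_e']
      ring

end Reindex

theorem stmt_4_general (M q : ℕ) (σ σ' : Equiv.Perm (Fin M))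
    (φ : (Fin q → Fin M) → ℂ) :
    Real.sqrt (∑ v : Fin q → Fin M, ‖φ (fun j => σ.symm (v j)) - φ (fun j => σ'.symm (v j))‖ ^ 2)
      ≤ 2 * Real.sqrt (∑ j : Fin q,
          ∑ v ∈ Finset.univ.filter (fun v : Fin q → Fin M => σ (v j) ≠ σ' (v j)),
            ‖φ v‖ ^ 2) := by
  have distance_le := sum_norm_sub_comp_sq_le
    (Equiv.piCongrRight fun _ : Fin q => σ.symm) (Equiv.piCongrRight fun _ => σ'.symm) φ
  have disagreement_somewhere (w : Fin q → Fin M)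
      (hw : w ∈ univ.filter fun w : Fin q → Fin M => (σ ∘ w) ≠ σ' ∘ w) :
      ∃ j, w ∈ univ.filter fun v : Fin q → Fin M => σ (v j) ≠ σ' (v j) := by
    simpa [Function.ne_iff] using hw
  calc _ ≤ Real.sqrt (4 * ∑ j : Fin q,
          ∑ v ∈ univ.filter (fun v : Fin q → Fin M => σ (v j) ≠ σ' (v j)), ‖φ v‖ ^ 2) :=
        Real.sqrt_le_sqrt <| distance_le.trans <| mul_le_mul_of_nonneg_left
          (sum_le_sum_sum_of_forall_exists_mem disagreement_somewhere fun _ => sq_nonneg _)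
          zero_le_four
    _ = _ := by
      rw [Real.sqrt_mul' _ (by positivity), show (4 : ℝ) = 2 ^ 2 by norm_num,
        Real.sqrt_sq zero_le_two]

/-- Parallel-query hybrid method: for permutations `π, π'` of `[M]`, the in-place
oracles applied in parallel to `q` query registers of a state `φ` satisfy
`‖(O_π^{⊗q} − O_{π'}^{⊗q})|φ⟩‖ ≤ 2√(∑_j p_j)`, where `p_j` is the weight of the
`j`-th query register on points where `π` and `π'` disagree.
States on `q` registers of dimension `M` are represented as functions
`(Fin q → Fin M) → ℂ`, and `O_σ^{⊗q}` maps `ψ` to `y ↦ ψ (σ⁻¹ ∘ y)`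
(i.e. `O_σ|x⟩ = |σ(x)⟩` on basis states). -/
theorem stmt_4 (M q : ℕ) (σ σ' : Equiv.Perm (Fin M))
    (φ : (Fin q → Fin M) → ℂ) (hφ : ∑ v : Fin q → Fin M, ‖φ v‖ ^ 2 = 1) :
    Real.sqrt (∑ v : Fin q → Fin M, ‖φ (fun j => σ.symm (v j)) - φ (fun j => σ'.symm (v j))‖ ^ 2)
      ≤ 2 * Real.sqrt (∑ j : Fin q,
          ∑ v ∈ Finset.univ.filter (fun v : Fin q → Fin M => σ (v j) ≠ σ' (v j)),
            ‖φ v‖ ^ 2) :=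
  stmt_4_general M q σ σ' φ
end

section
/- Let 0 ≤ s ≤ 1/2, 0 ≤ p ≤ 1, and define p_a = (√(sp) + √((1−s)(1−p)))². Then (p_a + p)/2 ≤ (1 + √s)/2 ≤ (1 + 1/√2)/2 < 0.9. -/
/-!
Writing `√s = t`, `√(1-s) = u`, `√p = x`, `√(1-p) = y`, the quantity `p_a + p` is the quadratic
form of the matrix `[[1+s, tu], [tu, 1-s]]` at the unit vector `(x, y)`; that matrix has
eigenvalues `1 ± t`, so `p_a + p ≤ 1 + √s`.
-/

lemma two_mul_mul_mul_le_of_sq_add_sq_eq_one {t u x y : ℝ} (htu : t ^ 2 + u ^ 2 = 1) :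
    2 * u * x * y ≤ (1 - t) * x ^ 2 + (1 + t) * y ^ 2 := by
  -- twice the difference is `((1-t)x - uy)² + ((1+t)y - ux)²`
  nlinarith [sq_nonneg ((1 - t) * x - u * y), sq_nonneg ((1 + t) * y - u * x)]

lemma sq_mul_add_mul_add_sq_le_one_add {t u x y : ℝ} (ht : 0 ≤ t) (htu : t ^ 2 + u ^ 2 = 1)
    (hxy : x ^ 2 + y ^ 2 = 1) : (t * x + u * y) ^ 2 + x ^ 2 ≤ 1 + t := by
  have h := two_mul_mul_mul_le_of_sq_add_sq_eq_one (x := x) (y := y) htu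
  nlinarith [mul_le_mul_of_nonneg_left h ht]

lemma sqrt_mul_add_sqrt_mul_sq_add_le {s p : ℝ} (hs0 : 0 ≤ s) (hs1 : s ≤ 1) (hp0 : 0 ≤ p)
    (hp1 : p ≤ 1) : (√(s * p) + √((1 - s) * (1 - p))) ^ 2 + p ≤ 1 + √s := by
  have hsp : (√p) ^ 2 + (√(1 - p)) ^ 2 = 1 := by
    rw [Real.sq_sqrt hp0, Real.sq_sqrt (by linarith)]; ring
  have hss : (√s) ^ 2 + (√(1 - s)) ^ 2 = 1 := by
    rw [Real.sq_sqrt hs0, Real.sq_sqrt (by linarith)]; ring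
  have h := sq_mul_add_mul_add_sq_le_one_add (Real.sqrt_nonneg s) hss hsp
  rwa [Real.sq_sqrt hp0, ← Real.sqrt_mul hs0, ← Real.sqrt_mul (by linarith)] at h

lemma sqrt_le_inv_sqrt_two {s : ℝ} (hs : s ≤ 1 / 2) : √s ≤ 1 / √2 := by
  rw [one_div, ← Real.sqrt_inv, ← one_div]
  exact Real.sqrt_le_sqrt hs

lemma one_add_inv_sqrt_two_div_two_lt : (1 + 1 / √2) / 2 < 0.9 := by
  have h2 : (5 / 4 : ℝ) < √2 := (Real.lt_sqrt (by norm_num)).2 (by norm_num)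
  have h : 1 / √2 < 4 / 5 := by
    rw [div_lt_iff₀ (by linarith)]; linarith
  norm_num [one_div] at h ⊢; linarith

/-- Soundness inequality for the QMA₁ verifier: for `0 ≤ s ≤ 1/2` and `0 ≤ p ≤ 1`, with
`p_a = (√(sp) + √((1−s)(1−p)))²`, one has `(p_a + p)/2 ≤ (1+√s)/2 ≤ (1+1/√2)/2 < 0.9`. -/
theorem stmt_7 (s p : ℝ) (hs0 : 0 ≤ s) (hs : s ≤ 1/2) (hp0 : 0 ≤ p) (hp1 : p ≤ 1) :
    ((Real.sqrt (s * p) + Real.sqrt ((1 - s) * (1 - p))) ^ 2 + p) / 2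
        ≤ (1 + Real.sqrt s) / 2
    ∧ (1 + Real.sqrt s) / 2 ≤ (1 + 1 / Real.sqrt 2) / 2
    ∧ (1 + 1 / Real.sqrt 2) / 2 < 0.9 := by
  refine ⟨?_, ?_, one_add_inv_sqrt_two_div_two_lt⟩
  · linarith [sqrt_mul_add_sqrt_mul_sq_add_le hs0 (by linarith) hp0 hp1]
  · linarith [sqrt_le_inv_sqrt_two hs]
end

section
/- For reals s ∈ [0,1] and p ∈ [0,1], the function f(p) = (1−s)/2 + s·p + √(s·p·(1−s)·(1−p)) satisfies f(p) ≤ (1 + √s)/2, with the maximum attained at p = (1 + √s)/2 when this lies in [0,1]. -/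
/-!
Write `s = t²` with `0 ≤ t ≤ 1`. The radicand factors as `t² · (p(1 - t)) · ((1 - p)(1 + t))`,
and AM-GM bounds the square root of the last two factors by half their sum `(1 + t)/2 - tp`.
The `tp` terms then cancel against `sp = t²p`, leaving `(1 - t²)/2 + t(1 + t)/2 = (1 + t)/2`.
Equality in AM-GM holds when `p(1 - t) = (1 - p)(1 + t)`, i.e. at `p = (1 + t)/2`.
-/

open Real

noncomputable def acceptanceProb (s p : ℝ) : ℝ :=
  (1 - s) / 2 + s * p + √(s * p * (1 - s) * (1 - p))

lemma Real.sqrt_mul_le_half_add {x y : ℝ} (hx : 0 ≤ x) (hy : 0 ≤ y) :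
    √(x * y) ≤ (x + y) / 2 :=
  Real.sqrt_le_iff.mpr ⟨by positivity, by nlinarith [sq_nonneg (x - y)]⟩

lemma acceptanceProb_sq {t : ℝ} (ht : 0 ≤ t) (p : ℝ) :
    acceptanceProb (t ^ 2) p
      = (1 - t ^ 2) / 2 + t ^ 2 * p + t * √((p * (1 - t)) * ((1 - p) * (1 + t))) := by
  have hrad : t ^ 2 * p * (1 - t ^ 2) * (1 - p) = t ^ 2 * ((p * (1 - t)) * ((1 - p) * (1 + t))) := by
    ring
  rw [acceptanceProb, hrad, Real.sqrt_mul (sq_nonneg t), Real.sqrt_sq ht]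

lemma acceptanceProb_sq_le {t p : ℝ} (ht0 : 0 ≤ t) (ht1 : t ≤ 1) (hp0 : 0 ≤ p) (hp1 : p ≤ 1) :
    acceptanceProb (t ^ 2) p ≤ (1 + t) / 2 := by
  have hamgm : √((p * (1 - t)) * ((1 - p) * (1 + t))) ≤ (p * (1 - t) + (1 - p) * (1 + t)) / 2 :=
    Real.sqrt_mul_le_half_add (by nlinarith) (by nlinarith)
  calc acceptanceProb (t ^ 2) p
      ≤ (1 - t ^ 2) / 2 + t ^ 2 * p + t * ((p * (1 - t) + (1 - p) * (1 + t)) / 2) := by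
        rw [acceptanceProb_sq ht0]; gcongr
    _ = (1 + t) / 2 := by ring

lemma acceptanceProb_sq_optimum {t : ℝ} (ht0 : 0 ≤ t) (ht1 : t ≤ 1) :
    acceptanceProb (t ^ 2) ((1 + t) / 2) = (1 + t) / 2 := by
  have hsq : ((1 + t) / 2 * (1 - t)) * ((1 - (1 + t) / 2) * (1 + t))
      = ((1 - t) * (1 + t) / 2) ^ 2 := by ring
  rw [acceptanceProb_sq ht0, hsq, Real.sqrt_sq (by nlinarith)]
  ring

/-- For `s, p ∈ [0,1]`, the function `f(p) = (1−s)/2 + s·p + √(s·p·(1−s)·(1−p))`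
satisfies `f(p) ≤ (1+√s)/2`, and the maximum is attained at `p = (1+√s)/2`
(which lies in `[0,1]`), where `f((1+√s)/2) = (1+√s)/2`. -/
theorem stmt_8 (s : ℝ) (hs0 : 0 ≤ s) (hs1 : s ≤ 1) :
    (∀ p : ℝ, 0 ≤ p → p ≤ 1 →
      (1 - s) / 2 + s * p + Real.sqrt (s * p * (1 - s) * (1 - p))
        ≤ (1 + Real.sqrt s) / 2)
    ∧ (1 + Real.sqrt s) / 2 ∈ Set.Icc (0 : ℝ) 1
    ∧ (1 - s) / 2 + s * ((1 + Real.sqrt s) / 2)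
        + Real.sqrt (s * ((1 + Real.sqrt s) / 2) * (1 - s) * (1 - (1 + Real.sqrt s) / 2))
        = (1 + Real.sqrt s) / 2 := by
  obtain ⟨t, ht0, rfl⟩ : ∃ t, 0 ≤ t ∧ s = t ^ 2 := ⟨√s, Real.sqrt_nonneg s, (Real.sq_sqrt hs0).symm⟩
  have ht1 : t ≤ 1 := by nlinarith
  rw [Real.sqrt_sq ht0]
  exact ⟨fun p hp0 hp1 => acceptanceProb_sq_le ht0 ht1 hp0 hp1,
    ⟨by linarith, by linarith⟩, acceptanceProb_sq_optimum ht0 ht1⟩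
end

section
/- Let U be a unitary on (ℂ²)^{⊗n} and suppose |μ⟩ is a unit vector with U|μ⟩ = |μ⟩. Define V = CSWAP_{C,T,A} · (I_C ⊗ I_T ⊗ U_A) · CSWAP_{C,T,A}, where CSWAP swaps registers T and A controlled on qubit C. Then for every |φ⟩ ∈ ℂ² ⊗ (ℂ²)^{⊗n}, V(|φ⟩ ⊗ |μ⟩) = ((|0⟩⟨0| ⊗ I + |1⟩⟨1| ⊗ U)|φ⟩) ⊗ |μ⟩. -/
/-- States on control ⊗ target ⊗ ancilla (`Bool × {0,1}ⁿ × {0,1}ⁿ`) are functions to `ℂ`.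
`CSWAP` swaps the target and ancilla registers controlled on the control qubit. -/
noncomputable def CSWAP (n : ℕ)
    (g : Bool × (Fin n → Bool) × (Fin n → Bool) → ℂ) :
    Bool × (Fin n → Bool) × (Fin n → Bool) → ℂ :=
  fun p => if p.1 then g (p.1, p.2.2, p.2.1) else g p

/-- `I ⊗ I ⊗ U`: apply `U` to the ancilla register. -/
noncomputable def applyOnAncilla (n : ℕ)
    (U : ((Fin n → Bool) → ℂ) →ₗ[ℂ] ((Fin n → Bool) → ℂ))
    (g : Bool × (Fin n → Bool) × (Fin n → Bool) → ℂ) :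
    Bool × (Fin n → Bool) × (Fin n → Bool) → ℂ :=
  fun p => U (fun a => g (p.1, p.2.1, a)) p.2.2

/-- Controlled-`U`: `|0⟩⟨0| ⊗ I + |1⟩⟨1| ⊗ U` on control ⊗ target. -/
noncomputable def controlledU (n : ℕ)
    (U : ((Fin n → Bool) → ℂ) →ₗ[ℂ] ((Fin n → Bool) → ℂ))
    (g : Bool × (Fin n → Bool) → ℂ) : Bool × (Fin n → Bool) → ℂ :=
  fun p => if p.1 then U (fun t => g (true, t)) p.2 else g p

theorem stmt_11_general (n : ℕ)
    (U : ((Fin n → Bool) → ℂ) →ₗ[ℂ] ((Fin n → Bool) → ℂ))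
    (μ : (Fin n → Bool) → ℂ) (hμ : U μ = μ)
    (φ : Bool × (Fin n → Bool) → ℂ) :
    CSWAP n (applyOnAncilla n U (CSWAP n (fun p => φ (p.1, p.2.1) * μ p.2.2)))
      = fun p => controlledU n U φ (p.1, p.2.1) * μ p.2.2 := by
  funext ⟨c, t, a⟩
  cases c
  · -- control off: the ancilla holds the multiple `φ (0, t) • μ` of the fixed point
    change U (φ (false, t) • μ) a = φ (false, t) * μ a
    rw [map_smul, hμ, Pi.smul_apply, smul_eq_mul]
  · -- control on: the swap moves the target state into the ancilla, scaled by `μ a`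
    change U (fun x => φ (true, x) * μ a) t = U (fun x => φ (true, x)) t * μ a
    have hscale : (fun x => φ (true, x) * μ a) = μ a • fun x => φ (true, x) :=
      funext fun _ => mul_comm _ _
    rw [hscale, map_smul, Pi.smul_apply, smul_eq_mul, mul_comm]

/-- If `U` is a unitary on `n` qubits and `μ` is a unit vector fixed by `U`, then
`V = CSWAP ∘ (I⊗I⊗U) ∘ CSWAP` implements controlled-`U` on the first two registers
while leaving the ancilla `μ` undisturbed: `V(φ ⊗ μ) = (controlled-U φ) ⊗ μ`. -/
theorem stmt_11 (n : ℕ)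
    (U : ((Fin n → Bool) → ℂ) →ₗ[ℂ] ((Fin n → Bool) → ℂ))
    (hU : ∀ f, ∑ x, ‖U f x‖ ^ 2 = ∑ x, ‖f x‖ ^ 2)
    (μ : (Fin n → Bool) → ℂ) (hμn : ∑ x, ‖μ x‖ ^ 2 = 1) (hμ : U μ = μ)
    (φ : Bool × (Fin n → Bool) → ℂ) :
    CSWAP n (applyOnAncilla n U (CSWAP n (fun p => φ (p.1, p.2.1) * μ p.2.2)))
      = fun p => controlledU n U φ (p.1, p.2.1) * μ p.2.2 :=
  stmt_11_general n U μ hμ φ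
end
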